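/- Let A ⊆ D_{αΔ}(S,P) contain D_Δ(S,P), and define Cov_A(S[b,d]) as the union of all intervals [a,c] such that there is a monotone path from (a,b) to (c,d) in A. Then Cov_P(S[b,d], Δ) ⊆ Cov_A(S[b,d]) ⊆ Cov_P(S[b,d], αΔ), where Cov_P(Q, r) is the union of all intervals [s,t] ⊆ [0,1] with d_F(P[s,t], Q) ≤ r. -/

import Mathlib

/-!
A monotone path in the `r`-free space from `(a,b)` to `(c,d)` is a pair of monotone
reparametrizations of `P[a,c]` and `S[b,d]` that stay within distance `r`, so it witnesses
`d_F(P[a,c], S[b,d]) ≤ r`; this gives the second inclusion.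

Conversely, `d_F ≤ Δ` only yields, for every `ε > 0`, reparametrizations at distance `Δ + ε`, i.e.
monotone paths in the `(Δ + ε)`-free space. Reparametrized by ℓ¹ arc length, these paths are
uniformly Lipschitz and range over a compact set of functions for pointwise convergence. Free
spaces of continuous curves are closed, so a limit point is a monotone path in the `Δ`-free space,
which gives the first inclusion.
-/

open Set

/-- The continuous Fréchet distance between two curves parametrized over `[0,1]`:
the infimum over nondecreasing surjective reparametrizations `f, g` of `[0,1]`
of the maximal pointwise distance. -/
noncomputable def frechetDist {E : Type*} [SeminormedAddCommGroup E] (P Q : ℝ → E) : ℝ :=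
  sInf {r : ℝ | ∃ f g : ℝ → ℝ,
    MonotoneOn f (Icc 0 1) ∧ MonotoneOn g (Icc 0 1) ∧
    f '' Icc 0 1 = Icc 0 1 ∧ g '' Icc 0 1 = Icc 0 1 ∧
    ∀ t ∈ Icc (0:ℝ) 1, ‖P (f t) - Q (g t)‖ ≤ r}

/-- The subcurve `P[s,t]`, reparametrized over `[0,1]`. -/
def subcurve {E : Type*} (P : ℝ → E) (s t : ℝ) : ℝ → E := fun u => P (s + u * (t - s))

/-- The `Δ`-coverage of a curve `Q` on `P`: the union of all parameter intervals `[s,t] ⊆ [0,1]`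
such that the subcurve `P[s,t]` has Fréchet distance at most `Δ` to `Q`. -/
def Cov {E : Type*} [SeminormedAddCommGroup E] (P Q : ℝ → E) (Δ : ℝ) : Set ℝ :=
  ⋃ (s : ℝ) (t : ℝ) (_ : 0 ≤ s) (_ : s ≤ t) (_ : t ≤ 1)
    (_ : frechetDist (subcurve P s t) Q ≤ Δ), Icc s t

/-- `P` is a polygonal curve of complexity (number of vertices) at most `n`. -/
def IsPolygonal {E : Type*} [SeminormedAddCommGroup E] [NormedSpace ℝ E]
    (P : ℝ → E) (n : ℕ) : Prop :=
  ∃ m : ℕ, m + 1 ≤ n ∧ ∃ t : Fin (m + 1) → ℝ,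
    t 0 = 0 ∧ t (Fin.last m) = 1 ∧ Monotone t ∧
    ∀ i : Fin m, ∀ u ∈ Icc (t i.castSucc) (t i.succ),
      P u = P (t i.castSucc) +
        ((u - t i.castSucc) / (t i.succ - t i.castSucc)) • (P (t i.succ) - P (t i.castSucc))

/-- The `Δ`-free space of `S` and `P` (the first coordinate is the parameter of `P`). -/
def freeSpace {E : Type*} [SeminormedAddCommGroup E] (S P : ℝ → E) (Δ : ℝ) : Set (ℝ × ℝ) :=
  {p : ℝ × ℝ | p.1 ∈ Icc (0:ℝ) 1 ∧ p.2 ∈ Icc (0:ℝ) 1 ∧ ‖P p.1 - S p.2‖ ≤ Δ}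

/-- A path inside `F` from `p` to `q` that is monotone nondecreasing in both coordinates. -/
def IsMonotonePathIn (F : Set (ℝ × ℝ)) (p q : ℝ × ℝ) : Prop :=
  ∃ γ : ℝ → ℝ × ℝ, ContinuousOn γ (Icc 0 1) ∧ γ 0 = p ∧ γ 1 = q ∧
    MonotoneOn (fun u => (γ u).1) (Icc 0 1) ∧ MonotoneOn (fun u => (γ u).2) (Icc 0 1) ∧
    ∀ u ∈ Icc (0:ℝ) 1, γ u ∈ F

/-- `Cov_A(S[b,d])`: the union of all intervals `[a,c]` such that there is a monotone path
from `(a,b)` to `(c,d)` in `A`. -/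
def CovA (A : Set (ℝ × ℝ)) (b d : ℝ) : Set ℝ :=
  ⋃ (a : ℝ) (c : ℝ) (_ : a ≤ c) (_ : IsMonotonePathIn A (a, b) (c, d)), Icc a c

open scoped NNReal

lemma eq_of_le_of_fst_add_snd_le {a b : ℝ × ℝ} (hab : a ≤ b) (h : b.1 + b.2 ≤ a.1 + a.2) :
    a = b :=
  Prod.ext (by linarith [hab.1, hab.2]) (by linarith [hab.1, hab.2])

lemma MonotoneOn.lipschitzOnWith_of_sub_le {f : ℝ → ℝ} {s : Set ℝ} {K : ℝ≥0}
    (hf : MonotoneOn f s) (h : ∀ x ∈ s, ∀ y ∈ s, x ≤ y → f y - f x ≤ K * (y - x)) :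
    LipschitzOnWith K f s := by
  refine LipschitzOnWith.of_dist_le_mul fun x hx y hy => ?_
  rw [Real.dist_eq, Real.dist_eq]
  rcases le_total x y with hxy | hxy
  · rw [abs_sub_comm, abs_of_nonneg (sub_nonneg.2 (hf hx hy hxy)), abs_sub_comm,
      abs_of_nonneg (sub_nonneg.2 hxy)]
    exact h x hx y hy hxy
  · rw [abs_of_nonneg (sub_nonneg.2 (hf hy hx hxy)), abs_of_nonneg (sub_nonneg.2 hxy)]
    exact h y hy x hx hxy

lemma MonotoneOn.continuousOn_of_image_Icc_eq {f : ℝ → ℝ} {a b c d : ℝ}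
    (hf : MonotoneOn f (Icc a b)) (him : f '' Icc a b = Icc c d) : ContinuousOn f (Icc a b) := by
  have hmaps : MapsTo f (Icc a b) (Icc c d) := him ▸ mapsTo_image f _
  have hsurj : Function.Surjective hmaps.restrict := by
    rintro ⟨y, hy⟩
    obtain ⟨x, hx, rfl⟩ := him.symm ▸ hy
    exact ⟨⟨x, hx⟩, rfl⟩
  rw [continuousOn_iff_continuous_domRestrict]
  exact continuous_subtype_val.comp
    (Monotone.continuous_of_surjective (f := hmaps.restrict) (fun x y hxy => hf x.2 y.2 hxy) hsurj)

lemma MonotoneOn.apply_left_right_of_image_Icc_eq {f : ℝ → ℝ} {a b c d : ℝ} (hab : a ≤ b)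
    (hf : MonotoneOn f (Icc a b)) (him : f '' Icc a b = Icc c d) : f a = c ∧ f b = d := by
  have ha : a ∈ Icc a b := left_mem_Icc.2 hab
  have hb : b ∈ Icc a b := right_mem_Icc.2 hab
  have hfa : f a ∈ Icc c d := him ▸ mem_image_of_mem f ha
  have hfb : f b ∈ Icc c d := him ▸ mem_image_of_mem f hb
  obtain ⟨x, hx, hxc⟩ := him.symm ▸ left_mem_Icc.2 (hfa.1.trans hfa.2)
  obtain ⟨y, hy, hyd⟩ := him.symm ▸ right_mem_Icc.2 (hfa.1.trans hfa.2)
  exact ⟨le_antisymm (hxc ▸ hf ha hx hx.1) hfa.1, le_antisymm hfb.2 (hyd ▸ hf hy hb hy.2)⟩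

namespace IsMonotonePathIn

variable {F G : Set (ℝ × ℝ)} {p q : ℝ × ℝ}

lemma mono (hFG : F ⊆ G) (h : IsMonotonePathIn F p q) : IsMonotonePathIn G p q :=
  let ⟨γ, hc, h0, h1, hm₁, hm₂, hF⟩ := h
  ⟨γ, hc, h0, h1, hm₁, hm₂, fun u hu => hFG (hF u hu)⟩

lemma left_mem (h : IsMonotonePathIn F p q) : p ∈ F := by
  obtain ⟨γ, -, h0, -, -, -, hF⟩ := h
  exact h0 ▸ hF 0 (left_mem_Icc.2 zero_le_one)

lemma right_mem (h : IsMonotonePathIn F p q) : q ∈ F := by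
  obtain ⟨γ, -, -, h1, -, -, hF⟩ := h
  exact h1 ▸ hF 1 (right_mem_Icc.2 zero_le_one)

end IsMonotonePathIn

/-- Monotone paths from `p` to `q` parametrized proportionally to `x + y`, their ℓ¹ arc length.
This normalization makes them uniformly Lipschitz, so that they form a compact family for
pointwise convergence. -/
def sumParamMonotonePaths (p q : ℝ × ℝ) : Set (ℝ → ℝ × ℝ) :=
  {γ | (∀ v, γ v ∈ Icc p q) ∧ MonotoneOn γ (Icc 0 1) ∧
    ∀ v ∈ Icc (0:ℝ) 1, (γ v).1 + (γ v).2 = p.1 + p.2 + v * (q.1 + q.2 - (p.1 + p.2))}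

lemma isCompact_sumParamMonotonePaths (p q : ℝ × ℝ) :
    IsCompact (sumParamMonotonePaths p q) := by
  have hbox : IsCompact (univ.pi fun _ : ℝ => Icc p q) := isCompact_univ_pi fun _ => isCompact_Icc
  refine hbox.of_isClosed_subset ?_ fun γ hγ v _ => hγ.1 v
  have h_box : IsClosed {γ : ℝ → ℝ × ℝ | ∀ v, γ v ∈ Icc p q} := by
    simp only [ofPred_forall]
    exact isClosed_iInter fun v => isClosed_Icc.preimage (continuous_apply v)
  have h_mono : IsClosed {γ : ℝ → ℝ × ℝ | MonotoneOn γ (Icc 0 1)} := by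
    simp only [MonotoneOn, ofPred_forall]
    exact isClosed_biInter fun v _ => isClosed_biInter fun v' _ => isClosed_iInter fun _ =>
      isClosed_le (continuous_apply v) (continuous_apply v')
  have h_sum : IsClosed {γ : ℝ → ℝ × ℝ | ∀ v ∈ Icc (0:ℝ) 1,
      (γ v).1 + (γ v).2 = p.1 + p.2 + v * (q.1 + q.2 - (p.1 + p.2))} := by
    simp only [ofPred_forall]
    exact isClosed_biInter fun v _ =>
      isClosed_eq ((continuous_apply v).fst.add (continuous_apply v).snd) continuous_const
  exact h_box.inter (h_mono.inter h_sum)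

namespace sumParamMonotonePaths

variable {p q : ℝ × ℝ} {γ : ℝ → ℝ × ℝ}

lemma apply_zero (hγ : γ ∈ sumParamMonotonePaths p q) : γ 0 = p :=
  (eq_of_le_of_fst_add_snd_le (hγ.1 0).1
    (by simp [hγ.2.2 0 (left_mem_Icc.2 zero_le_one)])).symm

lemma apply_one (hγ : γ ∈ sumParamMonotonePaths p q) : γ 1 = q :=
  eq_of_le_of_fst_add_snd_le (hγ.1 1).2 (by simp [hγ.2.2 1 (right_mem_Icc.2 zero_le_one)])

lemma continuousOn (hγ : γ ∈ sumParamMonotonePaths p q) : ContinuousOn γ (Icc 0 1) := by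
  obtain ⟨hbox, hmono, hsum⟩ := hγ
  have hpq : p ≤ q := (hbox 0).1.trans (hbox 0).2
  set L := q.1 + q.2 - (p.1 + p.2)
  have hL : 0 ≤ L := by linarith [hpq.1, hpq.2]
  have hincr : ∀ v ∈ Icc (0:ℝ) 1, ∀ v' ∈ Icc (0:ℝ) 1,
      (γ v').1 - (γ v).1 + ((γ v').2 - (γ v).2) = L * (v' - v) := by
    intro v hv v' hv'
    linear_combination hsum v' hv' - hsum v hv
  have h₁ : LipschitzOnWith L.toNNReal (fun v => (γ v).1) (Icc 0 1) :=
    MonotoneOn.lipschitzOnWith_of_sub_le (fun v hv v' hv' h => (hmono hv hv' h).1)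
      fun v hv v' hv' h => by
        rw [Real.coe_toNNReal L hL]; linarith [(hmono hv hv' h).2, hincr v hv v' hv']
  have h₂ : LipschitzOnWith L.toNNReal (fun v => (γ v).2) (Icc 0 1) :=
    MonotoneOn.lipschitzOnWith_of_sub_le (fun v hv v' hv' h => (hmono hv hv' h).2)
      fun v hv v' hv' h => by
        rw [Real.coe_toNNReal L hL]; linarith [(hmono hv hv' h).1, hincr v hv v' hv']
  exact h₁.continuousOn.prodMk h₂.continuousOn

lemma isMonotonePathIn {F : Set (ℝ × ℝ)} (hγ : γ ∈ sumParamMonotonePaths p q)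
    (hF : ∀ v ∈ Icc (0:ℝ) 1, γ v ∈ F) : IsMonotonePathIn F p q :=
  ⟨γ, continuousOn hγ, apply_zero hγ, apply_one hγ,
    fun _ hv _ hv' h => (hγ.2.1 hv hv' h).1, fun _ hv _ hv' h => (hγ.2.1 hv hv' h).2, hF⟩

end sumParamMonotonePaths

/-- Reparametrize a monotone path by ℓ¹ arc length: by the intermediate value theorem each level
of `x + y` is reached, and the points reached are ordered along the path. -/
lemma IsMonotonePathIn.exists_mem_sumParamMonotonePaths {F : Set (ℝ × ℝ)} {p q : ℝ × ℝ}
    (h : IsMonotonePathIn F p q) :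
    ∃ γ ∈ sumParamMonotonePaths p q, ∀ v ∈ Icc (0:ℝ) 1, γ v ∈ F := by
  obtain ⟨η, hc, h0, h1, hm₁, hm₂, hF⟩ := h
  have hI0 : (0:ℝ) ∈ Icc (0:ℝ) 1 := left_mem_Icc.2 zero_le_one
  have hI1 : (1:ℝ) ∈ Icc (0:ℝ) 1 := right_mem_Icc.2 zero_le_one
  have hmono : MonotoneOn η (Icc 0 1) := fun u hu u' hu' h => ⟨hm₁ hu hu' h, hm₂ hu hu' h⟩
  have hpq : p ≤ q := h0 ▸ h1 ▸ hmono hI0 hI1 zero_le_one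
  set w : ℝ → ℝ := fun v => p.1 + p.2 + v * (q.1 + q.2 - (p.1 + p.2))
  have hw : Monotone w := fun v v' h => by
    simp only [w]; nlinarith [hpq.1, hpq.2]
  have hlevel : ∀ v, ∃ u ∈ Icc (0:ℝ) 1, v ∈ Icc (0:ℝ) 1 → (η u).1 + (η u).2 = w v := by
    intro v
    by_cases hv : v ∈ Icc (0:ℝ) 1
    · have hwv : w v ∈ Icc ((η 0).1 + (η 0).2) ((η 1).1 + (η 1).2) := by
        rw [h0, h1]
        exact ⟨by simpa [w] using hw hv.1, by simpa [w] using hw hv.2⟩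
      obtain ⟨u, hu, huv⟩ := intermediate_value_Icc zero_le_one
        ((continuous_fst.comp_continuousOn hc).add (continuous_snd.comp_continuousOn hc)) hwv
      exact ⟨u, hu, fun _ => huv⟩
    · exact ⟨0, hI0, fun h => absurd h hv⟩
  choose u hu hlev using hlevel
  refine ⟨η ∘ u, ⟨fun v => ?_, fun v hv v' hv' hvv' => ?_, hlev⟩, fun v _ => hF _ (hu v)⟩
  · exact ⟨h0 ▸ hmono hI0 (hu v) (hu v).1, h1 ▸ hmono (hu v) hI1 (hu v).2⟩
  · rcases le_total (u v) (u v') with h | h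
    · exact hmono (hu v) (hu v') h
    · refine (eq_of_le_of_fst_add_snd_le (hmono (hu v') (hu v) h) ?_).ge
      simp only [hlev v hv, hlev v' hv', hw hvv']

lemma IsMonotonePathIn.iInter {F : ℕ → Set (ℝ × ℝ)} {p q : ℝ × ℝ}
    (hclosed : ∀ n, IsClosed (F n)) (hanti : Antitone F) (h : ∀ n, IsMonotonePathIn (F n) p q) :
    IsMonotonePathIn (⋂ n, F n) p q := by
  set K : ℕ → Set (ℝ → ℝ × ℝ) := fun n =>
    sumParamMonotonePaths p q ∩ ⋂ v ∈ Icc (0:ℝ) 1, (fun γ => γ v) ⁻¹' F n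
  have hK : ∀ n, IsClosed (⋂ v ∈ Icc (0:ℝ) 1, (fun γ : ℝ → ℝ × ℝ => γ v) ⁻¹' F n) :=
    fun n => isClosed_biInter fun v _ => (hclosed n).preimage (continuous_apply v)
  obtain ⟨γ, hγ⟩ := IsCompact.nonempty_iInter_of_sequence_nonempty_isCompact_isClosed K
    (fun n => inter_subset_inter_right _
      (biInter_mono subset_rfl fun v _ => preimage_mono (hanti n.le_succ)))
    (fun n => by
      obtain ⟨γ, hγ, hF⟩ := (h n).exists_mem_sumParamMonotonePaths
      exact ⟨γ, hγ, mem_iInter₂.2 hF⟩)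
    ((isCompact_sumParamMonotonePaths p q).inter_right (hK 0))
    (fun n => (isCompact_sumParamMonotonePaths p q).isClosed.inter (hK n))
  simp only [K, mem_iInter, mem_inter_iff, mem_preimage] at hγ
  exact sumParamMonotonePaths.isMonotonePathIn (hγ 0).1
    fun v hv => mem_iInter.2 fun n => (hγ n).2 v hv

lemma exists_subcurve_reparam {E : Type*} (P : ℝ → E) {h : ℝ → ℝ} {a c : ℝ}
    (hm : MonotoneOn h (Icc 0 1)) (hc : ContinuousOn h (Icc 0 1)) (h0 : h 0 = a) (h1 : h 1 = c) :
    ∃ f : ℝ → ℝ, MonotoneOn f (Icc 0 1) ∧ f '' Icc 0 1 = Icc 0 1 ∧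
      ∀ u ∈ Icc (0:ℝ) 1, subcurve P a c (f u) = P (h u) := by
  have hI0 : (0:ℝ) ∈ Icc (0:ℝ) 1 := left_mem_Icc.2 zero_le_one
  have hI1 : (1:ℝ) ∈ Icc (0:ℝ) 1 := right_mem_Icc.2 zero_le_one
  have him : h '' Icc 0 1 = Icc a c := by
    refine Subset.antisymm ?_ (h0 ▸ h1 ▸ intermediate_value_Icc zero_le_one hc)
    rintro _ ⟨u, hu, rfl⟩
    exact ⟨h0 ▸ hm hI0 hu hu.1, h1 ▸ hm hu hI1 hu.2⟩
  rcases (h0 ▸ h1 ▸ hm hI0 hI1 zero_le_one : a ≤ c).eq_or_lt with rfl | hac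
  · refine ⟨id, monotoneOn_id, image_id _, fun u hu => ?_⟩
    have hu' : h u ∈ Icc a a := him ▸ mem_image_of_mem h hu
    rw [Icc_self, mem_singleton_iff] at hu'
    simp [subcurve, hu']
  · have hca : 0 < c - a := sub_pos.2 hac
    refine ⟨fun u => (h u - a) / (c - a), fun u hu v hv huv => ?_, ?_, fun u _ => ?_⟩
    · exact div_le_div_of_nonneg_right (by linarith [hm hu hv huv]) hca.le
    · rw [← image_image (fun x => (x - a) / (c - a)) h, him]
      ext y
      constructor
      · rintro ⟨x, hx, rfl⟩
        exact ⟨div_nonneg (by linarith [hx.1]) hca.le, (div_le_one hca).2 (by linarith [hx.2])⟩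
      · intro hy
        refine ⟨a + y * (c - a), ⟨by nlinarith [hy.1], by nlinarith [hy.2]⟩, ?_⟩
        field_simp
        ring
    · simp only [subcurve, div_mul_cancel₀ _ hca.ne', add_sub_cancel]

section Curves

variable {E : Type*} [SeminormedAddCommGroup E]

lemma frechetDist_le_of_reparam {P Q : ℝ → E} {f g : ℝ → ℝ} {r : ℝ}
    (hf : MonotoneOn f (Icc 0 1)) (hg : MonotoneOn g (Icc 0 1))
    (hfi : f '' Icc 0 1 = Icc 0 1) (hgi : g '' Icc 0 1 = Icc 0 1)
    (h : ∀ u ∈ Icc (0:ℝ) 1, ‖P (f u) - Q (g u)‖ ≤ r) : frechetDist P Q ≤ r :=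
  csInf_le ⟨0, fun _ ⟨_, _, _, _, _, _, h⟩ => (norm_nonneg _).trans (h 0 ⟨le_rfl, zero_le_one⟩)⟩
    ⟨f, g, hf, hg, hfi, hgi, h⟩

lemma exists_reparam_of_frechetDist_lt {P Q : ℝ → E} {r : ℝ} (hP : ContinuousOn P (Icc 0 1))
    (hQ : ContinuousOn Q (Icc 0 1)) (h : frechetDist P Q < r) :
    ∃ f g : ℝ → ℝ, MonotoneOn f (Icc 0 1) ∧ MonotoneOn g (Icc 0 1) ∧
      f '' Icc 0 1 = Icc 0 1 ∧ g '' Icc 0 1 = Icc 0 1 ∧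
      ∀ u ∈ Icc (0:ℝ) 1, ‖P (f u) - Q (g u)‖ ≤ r := by
  obtain ⟨x, -, hmax⟩ :=
    isCompact_Icc.exists_isMaxOn (nonempty_Icc.2 zero_le_one) (hP.sub hQ).norm
  obtain ⟨r', ⟨f, g, hf, hg, hfi, hgi, hr'⟩, hr'r⟩ := exists_lt_of_csInf_lt
    (by exact ⟨_, id, id, monotoneOn_id, monotoneOn_id, image_id _, image_id _,
      fun u hu => hmax hu⟩) h
  exact ⟨f, g, hf, hg, hfi, hgi, fun u hu => (hr' u hu).trans hr'r.le⟩

lemma ContinuousOn.subcurve {P : ℝ → E} (hP : ContinuousOn P (Icc 0 1)) {s t : ℝ}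
    (hs : 0 ≤ s) (hst : s ≤ t) (ht : t ≤ 1) : ContinuousOn (subcurve P s t) (Icc 0 1) :=
  hP.comp (by fun_prop) fun u hu =>
    ⟨by nlinarith [hu.1, hu.2], by nlinarith [hu.1, hu.2]⟩

lemma IsPolygonal.continuousOn [NormedSpace ℝ E] {P : ℝ → E} {n : ℕ} (hP : IsPolygonal P n) :
    ContinuousOn P (Icc 0 1) := by
  obtain ⟨m, -, t, ht0, ht1, htm, hseg⟩ := hP
  have hprefix : ∀ k (hk : k < m + 1), ContinuousOn P (Icc (t 0) (t ⟨k, hk⟩)) := by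
    intro k
    induction k with
    | zero =>
      intro hk
      rw [show (⟨0, hk⟩ : Fin (m + 1)) = 0 from rfl, Icc_self]
      exact continuousOn_singleton _ _
    | succ k ih =>
      intro hk
      let i : Fin m := ⟨k, Nat.succ_lt_succ_iff.1 hk⟩
      have hpiece : ContinuousOn P (Icc (t i.castSucc) (t i.succ)) :=
        (Continuous.continuousOn (by fun_prop)).congr (hseg i)
      have hprev : ContinuousOn P (Icc (t 0) (t i.castSucc)) := ih (by omega)
      have hunion := hprev.union_of_isClosed hpiece isClosed_Icc isClosed_Icc
      rwa [Icc_union_Icc_eq_Icc (htm (Fin.zero_le _)) (htm i.castSucc_le_succ)] at hunion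
  have hall := hprefix m (Nat.lt_succ_self m)
  rwa [ht0, show (⟨m, Nat.lt_succ_self m⟩ : Fin (m + 1)) = Fin.last m from rfl, ht1] at hall

variable {P S : ℝ → E}

lemma isClosed_freeSpace (hP : ContinuousOn P (Icc 0 1)) (hS : ContinuousOn S (Icc 0 1))
    (r : ℝ) : IsClosed (freeSpace S P r) := by
  have h : freeSpace S P r =
      (Icc 0 1 ×ˢ Icc 0 1) ∩ (fun x : ℝ × ℝ => ‖P x.1 - S x.2‖) ⁻¹' Iic r := by
    ext x
    simp only [freeSpace, mem_inter_iff, mem_prod, mem_preimage, mem_Iic,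
      mem_ofPred_eq, and_assoc]
  rw [h]
  exact ((hP.comp continuousOn_fst fun _ hx => hx.1).sub
    (hS.comp continuousOn_snd fun _ hx => hx.2)).norm.preimage_isClosed_of_isClosed
    (isClosed_Icc.prod isClosed_Icc) isClosed_Iic

lemma freeSpace_mono {r r' : ℝ} (h : r ≤ r') : freeSpace S P r ⊆ freeSpace S P r' :=
  fun _ ⟨hx, hy, hr⟩ => ⟨hx, hy, hr.trans h⟩

lemma iInter_freeSpace_add_one_div (r : ℝ) :
    ⋂ n : ℕ, freeSpace S P (r + 1 / (n + 1)) = freeSpace S P r := by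
  refine Subset.antisymm (fun x hx => ?_)
    (subset_iInter fun n => freeSpace_mono (le_add_of_nonneg_right (by positivity)))
  obtain ⟨hx₁, hx₂, -⟩ := mem_iInter.1 hx 0
  refine ⟨hx₁, hx₂, le_of_forall_pos_lt_add fun ε hε => ?_⟩
  obtain ⟨n, hn⟩ := exists_nat_one_div_lt hε
  exact ((mem_iInter.1 hx n).2.2).trans_lt (by linarith)

theorem frechetDist_subcurve_le_of_isMonotonePathIn {r a b c d : ℝ}
    (hpath : IsMonotonePathIn (freeSpace S P r) (a, b) (c, d)) :
    frechetDist (subcurve P a c) (subcurve S b d) ≤ r := by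
  obtain ⟨γ, hγc, hγ0, hγ1, hm₁, hm₂, hmem⟩ := hpath
  obtain ⟨f, hfm, hfi, hfe⟩ := exists_subcurve_reparam P hm₁
    (continuous_fst.comp_continuousOn hγc) (by rw [hγ0]) (by rw [hγ1])
  obtain ⟨g, hgm, hgi, hge⟩ := exists_subcurve_reparam S hm₂
    (continuous_snd.comp_continuousOn hγc) (by rw [hγ0]) (by rw [hγ1])
  refine frechetDist_le_of_reparam hfm hgm hfi hgi fun u hu => ?_
  rw [hfe u hu, hge u hu]
  exact (hmem u hu).2.2

theorem isMonotonePathIn_of_frechetDist_subcurve_lt (hP : ContinuousOn P (Icc 0 1))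
    (hS : ContinuousOn S (Icc 0 1)) {s t b d r : ℝ} (hs : 0 ≤ s) (hst : s ≤ t) (ht : t ≤ 1)
    (hb : 0 ≤ b) (hbd : b ≤ d) (hd : d ≤ 1)
    (hF : frechetDist (subcurve P s t) (subcurve S b d) < r) :
    IsMonotonePathIn (freeSpace S P r) (s, b) (t, d) := by
  obtain ⟨f, g, hf, hg, hfi, hgi, hfg⟩ :=
    exists_reparam_of_frechetDist_lt (hP.subcurve hs hst ht) (hS.subcurve hb hbd hd) hF
  obtain ⟨hf0, hf1⟩ := hf.apply_left_right_of_image_Icc_eq zero_le_one hfi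
  obtain ⟨hg0, hg1⟩ := hg.apply_left_right_of_image_Icc_eq zero_le_one hgi
  have hf01 : ∀ u ∈ Icc (0:ℝ) 1, f u ∈ Icc (0:ℝ) 1 := fun u hu => hfi ▸ mem_image_of_mem f hu
  have hg01 : ∀ u ∈ Icc (0:ℝ) 1, g u ∈ Icc (0:ℝ) 1 := fun u hu => hgi ▸ mem_image_of_mem g hu
  refine ⟨fun u => (s + f u * (t - s), b + g u * (d - b)), ?_, by simp [hf0, hg0],
    by simp [hf1, hg1], fun u hu v hv huv => ?_, fun u hu v hv huv => ?_, fun u hu => ?_⟩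
  · have hfc := hf.continuousOn_of_image_Icc_eq hfi
    have hgc := hg.continuousOn_of_image_Icc_eq hgi
    exact (continuousOn_const.add (hfc.mul continuousOn_const)).prodMk
      (continuousOn_const.add (hgc.mul continuousOn_const))
  · nlinarith [hf hu hv huv]
  · nlinarith [hg hu hv huv]
  · obtain ⟨hfu₀, hfu₁⟩ := hf01 u hu
    obtain ⟨hgu₀, hgu₁⟩ := hg01 u hu
    exact ⟨⟨by nlinarith, by nlinarith⟩, ⟨by nlinarith, by nlinarith⟩, hfg u hu⟩

theorem isMonotonePathIn_of_frechetDist_subcurve_le (hP : ContinuousOn P (Icc 0 1))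
    (hS : ContinuousOn S (Icc 0 1)) {s t b d r : ℝ} (hs : 0 ≤ s) (hst : s ≤ t) (ht : t ≤ 1)
    (hb : 0 ≤ b) (hbd : b ≤ d) (hd : d ≤ 1)
    (hF : frechetDist (subcurve P s t) (subcurve S b d) ≤ r) :
    IsMonotonePathIn (freeSpace S P r) (s, b) (t, d) := by
  rw [← iInter_freeSpace_add_one_div r]
  exact IsMonotonePathIn.iInter (fun n => isClosed_freeSpace hP hS _)
    (fun m n hmn => freeSpace_mono (by gcongr))
    fun n => isMonotonePathIn_of_frechetDist_subcurve_lt hP hS hs hst ht hb hbd hd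
      (hF.trans_lt (lt_add_of_pos_right r (by positivity)))

end Curves

theorem stmt_6_general {E : Type*} [SeminormedAddCommGroup E] [NormedSpace ℝ E]
    (P S : ℝ → E) (n m : ℕ) (hP : IsPolygonal P n) (hS : IsPolygonal S m)
    (Δ α : ℝ)
    (A : Set (ℝ × ℝ)) (hA₁ : freeSpace S P Δ ⊆ A) (hA₂ : A ⊆ freeSpace S P (α * Δ))
    (b d : ℝ) (hb : 0 ≤ b) (hbd : b ≤ d) (hd : d ≤ 1) :
    Cov P (subcurve S b d) Δ ⊆ CovA A b d ∧
      CovA A b d ⊆ Cov P (subcurve S b d) (α * Δ) := by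
  simp only [subset_def, Cov, CovA, mem_iUnion]
  constructor
  · rintro x ⟨s, t, hs, hst, ht, hF, hx⟩
    exact ⟨s, t, hst, (isMonotonePathIn_of_frechetDist_subcurve_le hP.continuousOn
      hS.continuousOn hs hst ht hb hbd hd hF).mono hA₁, hx⟩
  · rintro x ⟨a, c, hac, hpath, hx⟩
    have hpath' := hpath.mono hA₂
    exact ⟨a, c, hpath'.left_mem.1.1, hac, hpath'.right_mem.1.2,
      frechetDist_subcurve_le_of_isMonotonePathIn hpath', hx⟩

/-- If `D_Δ(S,P) ⊆ A ⊆ D_{αΔ}(S,P)`, then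
`Cov_P(S[b,d], Δ) ⊆ Cov_A(S[b,d]) ⊆ Cov_P(S[b,d], αΔ)`. -/
theorem stmt_6 {E : Type*} [SeminormedAddCommGroup E] [NormedSpace ℝ E]
    (P S : ℝ → E) (n m : ℕ) (hP : IsPolygonal P n) (hS : IsPolygonal S m)
    (Δ α : ℝ) (hΔ : 0 ≤ Δ) (hα : 1 ≤ α)
    (A : Set (ℝ × ℝ)) (hA₁ : freeSpace S P Δ ⊆ A) (hA₂ : A ⊆ freeSpace S P (α * Δ))
    (b d : ℝ) (hb : 0 ≤ b) (hbd : b ≤ d) (hd : d ≤ 1) :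
    Cov P (subcurve S b d) Δ ⊆ CovA A b d ∧
      CovA A b d ⊆ Cov P (subcurve S b d) (α * Δ) :=
  stmt_6_general P S n m hP hS Δ α A hA₁ hA₂ b d hb hbd hd
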